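/- arXiv:1801.05319 — 3 statements merged into one kernel-verified Lean document; each statement's English description precedes it below -/
import Mathlib

section
/- The map G : ℂ → OnePoint ℂ, corestricted to the subtype {w : OnePoint ℂ // w ≠ 1 ∧ w ≠ −1} (which contains all values of G, since G(z) is never 1 or −1), is a covering map. -/
open Complex OnePoint

/-- The extension `G : ℂ → ℙ¹` of the quotient map `g`, sending points where the
denominator vanishes to the point `∞` of the one-point compactification. -/
noncomputable def G (z : ℂ) : OnePoint ℂ :=
  if 1 + Complex.exp (2 * Real.pi * Complex.I * z) = 0 then OnePoint.infty
  else ((1 - Complex.exp (2 * Real.pi * Complex.I * z)) /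
    (1 + Complex.exp (2 * Real.pi * Complex.I * z)) : ℂ)

namespace Stmt8Aux

open Filter Topology Set

/-! ### A Möbius involution on the Riemann sphere -/

/-- The Möbius involution `w ↦ (1-w)/(1+w)` on `OnePoint ℂ`. -/
noncomputable def M : OnePoint ℂ → OnePoint ℂ := fun w =>
  w.elim ((-1 : ℂ) : OnePoint ℂ)
    (fun c => if 1 + c = 0 then (∞ : OnePoint ℂ) else (((1 - c) / (1 + c) : ℂ) : OnePoint ℂ))

@[simp] lemma M_infty : M ∞ = ((-1 : ℂ) : OnePoint ℂ) := rfl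

@[simp] lemma M_coe (c : ℂ) :
    M (c : OnePoint ℂ) =
      if 1 + c = 0 then (∞ : OnePoint ℂ) else (((1 - c) / (1 + c) : ℂ) : OnePoint ℂ) := rfl

lemma M_M (w : OnePoint ℂ) : M (M w) = w := by
  induction w using OnePoint.rec with
  | infty =>
    rw [M_infty, M_coe, if_pos (by ring)]
  | coe c =>
    by_cases hc : 1 + c = 0
    · have hc' : c = -1 := by linear_combination hc
      rw [M_coe, if_pos hc, M_infty, hc']
    · have h2 : (1 : ℂ) + (1 - c) / (1 + c) = 2 / (1 + c) := by
        field_simp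
        ring
      have h2' : (1 : ℂ) + (1 - c) / (1 + c) ≠ 0 := by
        rw [h2]
        exact div_ne_zero two_ne_zero hc
      rw [M_coe, if_neg hc, M_coe, if_neg h2', OnePoint.coe_eq_coe]
      field_simp
      ring

lemma continuous_M : Continuous M := by
  rw [OnePoint.continuous_iff]
  constructor
  · -- behaviour at infinity : `M` tends to `-1`
    show Tendsto (fun c : ℂ => M c) (coclosedCompact ℂ) (𝓝 (M ∞))
    rw [M_infty, Filter.coclosedCompact_eq_cocompact, ← Metric.cobounded_eq_cocompact]
    have h1 : ∀ᶠ c : ℂ in Bornology.cobounded ℂ,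
        (((1 - c) / (1 + c) : ℂ) : OnePoint ℂ) = M c := by
      filter_upwards [eventually_cobounded_le_norm 2] with c hc
      have h0 : 1 + c ≠ 0 := by
        intro h
        have : c = -1 := by linear_combination h
        rw [this] at hc
        norm_num at hc
      rw [M_coe, if_neg h0]
    refine Tendsto.congr' h1 ?_
    have h2 : Tendsto (fun c : ℂ => (1 - c) / (1 + c)) (Bornology.cobounded ℂ) (𝓝 (-1)) := by
      have h3 : ∀ᶠ c : ℂ in Bornology.cobounded ℂ,
          (c⁻¹ - 1) / (c⁻¹ + 1) = (1 - c) / (1 + c) := by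
        filter_upwards [eventually_cobounded_le_norm 2] with c hc
        have hc0 : c ≠ 0 := by
          intro h; rw [h] at hc; norm_num at hc
        rw [div_eq_div_iff]
        · field_simp
        · intro h
          have hinv : c⁻¹ = -1 := by linear_combination h
          have hcm : c = -1 := by
            rw [← inv_inv c, hinv]; norm_num
          rw [hcm] at hc; norm_num at hc
        · intro h
          have hcm : c = -1 := by linear_combination h
          rw [hcm] at hc; norm_num at hc
      refine Tendsto.congr' h3 ?_
      have hinv : Tendsto (fun c : ℂ => c⁻¹) (Bornology.cobounded ℂ) (𝓝 0) :=
        tendsto_inv₀_cobounded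
      have : Tendsto (fun c : ℂ => (c⁻¹ - 1) / (c⁻¹ + 1)) (Bornology.cobounded ℂ)
          (𝓝 ((0 - 1) / (0 + 1))) :=
        Tendsto.div (hinv.sub tendsto_const_nhds) (hinv.add tendsto_const_nhds) (by norm_num)
      simpa using this
    exact (OnePoint.continuous_coe.tendsto _).comp h2
  · -- continuity on `ℂ`
    rw [continuous_iff_continuousAt]
    intro c
    by_cases hc : 1 + c = 0
    · have hc' : c = -1 := by linear_combination hc
      subst hc'
      have hval : M ((-1 : ℂ) : OnePoint ℂ) = ∞ := by rw [M_coe, if_pos (by ring)]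
      show ContinuousAt (fun x : ℂ => M x) (-1)
      rw [ContinuousAt, hval, ← nhdsNE_sup_pure, tendsto_sup]
      constructor
      · have hev : ∀ᶠ x : ℂ in 𝓝[≠] (-1),
            (((1 - x) / (1 + x) : ℂ) : OnePoint ℂ) = M x := by
          filter_upwards [self_mem_nhdsWithin] with x hx
          have hx' : x ≠ -1 := hx
          have h0 : 1 + x ≠ 0 := by
            intro h
            exact hx' (by linear_combination h)
          rw [M_coe, if_neg h0]
        refine Tendsto.congr' hev ?_
        refine OnePoint.tendsto_coe_infty.comp ?_
        rw [Filter.coclosedCompact_eq_cocompact, ← Metric.cobounded_eq_cocompact,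
          ← tendsto_norm_atTop_iff_cobounded]
        have hnum : Tendsto (fun x : ℂ => ‖1 - x‖) (𝓝[≠] (-1)) (𝓝 2) := by
          have h2 : ‖(1 : ℂ) - (-1)‖ = 2 := by norm_num
          have ht : Tendsto (fun x : ℂ => ‖1 - x‖) (𝓝 (-1)) (𝓝 ‖(1 : ℂ) - (-1)‖) :=
            ((continuous_const.sub continuous_id).norm).tendsto (-1)
          rw [h2] at ht
          exact ht.mono_left nhdsWithin_le_nhds
        have hden : Tendsto (fun x : ℂ => ‖1 + x‖⁻¹) (𝓝[≠] (-1)) atTop := by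
          refine tendsto_inv_nhdsGT_zero.comp ?_
          rw [tendsto_nhdsWithin_iff]
          constructor
          · have h0 : ‖(1 : ℂ) + (-1)‖ = 0 := by norm_num
            have ht : Tendsto (fun x : ℂ => ‖1 + x‖) (𝓝 (-1)) (𝓝 ‖(1 : ℂ) + (-1)‖) :=
              ((continuous_const.add continuous_id).norm).tendsto (-1)
            rw [h0] at ht
            exact ht.mono_left nhdsWithin_le_nhds
          · filter_upwards [self_mem_nhdsWithin] with x hx
            have hx' : x ≠ -1 := hx
            have h0 : 1 + x ≠ 0 := by
              intro h
              exact hx' (by linear_combination h)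
            exact Set.mem_Ioi.mpr (norm_pos_iff.mpr h0)
        have := hnum.pos_mul_atTop (by norm_num) hden
        refine this.congr fun x => ?_
        rw [norm_div, div_eq_mul_inv]
      · rw [tendsto_pure_left]
        intro s hs
        have : M ((-1 : ℂ) : OnePoint ℂ) = ∞ := hval
        rw [this]
        exact mem_of_mem_nhds hs
    · have hev : ∀ᶠ x : ℂ in 𝓝 c, (((1 - x) / (1 + x) : ℂ) : OnePoint ℂ) = M x := by
        have hopen : {x : ℂ | 1 + x ≠ 0} ∈ 𝓝 c :=
          (isOpen_ne.preimage (continuous_const.add continuous_id)).mem_nhds hc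
        filter_upwards [hopen] with x hx
        rw [M_coe, if_neg hx]
      refine ContinuousAt.congr ?_ hev
      exact (OnePoint.continuous_coe.continuousAt).comp
        (((continuous_const.sub continuous_id).continuousAt).div
          ((continuous_const.add continuous_id).continuousAt) hc)

/-! ### The exponential covering of `ℂ ∖ {0}` -/

/-- Shorthand for `2πi`. -/
noncomputable def K : ℂ := 2 * Real.pi * Complex.I

lemma K_ne : K ≠ 0 := by
  simp [K, Real.pi_ne_zero, Complex.I_ne_zero, Complex.ofReal_ne_zero]

/-- The punctured complex plane, as a subtype. -/
abbrev C0 : Type := {z : ℂ // z ≠ 0}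

/-- The exponential covering `z ↦ exp(2πiz)` of the punctured plane. -/
noncomputable def p (z : ℂ) : C0 := ⟨Complex.exp (K * z), Complex.exp_ne_zero _⟩

lemma continuous_p : Continuous p :=
  (Complex.continuous_exp.comp (continuous_const.mul continuous_id)).subtype_mk _

variable (w0 : C0)

/-- A branch of `(2πi)⁻¹ log` adapted to the base point `w0`. -/
noncomputable def ell (w : ℂ) : ℂ := (Complex.log w0.val + Complex.log (w / w0.val)) / K

/-- The base set for the trivialization at `w0`. -/
def U : Set C0 := {w | w.val / w0.val ∈ Complex.slitPlane}

lemma isOpen_U : IsOpen (U w0) := by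
  have : U w0 = Subtype.val ⁻¹' ((fun w : ℂ => w / w0.val) ⁻¹' Complex.slitPlane) := rfl
  rw [this]
  exact ((Complex.isOpen_slitPlane.preimage (continuous_id.div_const _)).preimage
    continuous_subtype_val)

lemma mem_U_self : w0 ∈ U w0 := by
  have : w0.val / w0.val = 1 := div_self w0.2
  simp only [U, Set.mem_setOf_eq, this]
  exact Complex.one_mem_slitPlane

lemma exp_K_ell (w : ℂ) (hw : w ≠ 0) : Complex.exp (K * ell w0 w) = w := by
  have h1 : K * ell w0 w = Complex.log w0.val + Complex.log (w / w0.val) := by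
    rw [ell, mul_div_cancel₀ _ K_ne]
  rw [h1, Complex.exp_add, Complex.exp_log w0.2, Complex.exp_log (div_ne_zero hw w0.2),
    mul_div_cancel₀ _ w0.2]

lemma exp_K_int (n : ℤ) : Complex.exp (K * n) = 1 := by
  have : K * (n : ℂ) = (n : ℂ) * (2 * Real.pi * Complex.I) := by rw [K]; ring
  rw [this]
  exact Complex.exp_int_mul_two_pi_mul_I n

lemma p_ell_add (w : C0) (n : ℤ) : p (ell w0 w.val + n) = w := by
  refine Subtype.ext ?_
  show Complex.exp (K * (ell w0 w.val + n)) = w.val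
  rw [mul_add, Complex.exp_add, exp_K_ell w0 w.val w.2, exp_K_int, mul_one]

lemma exists_int (z : ℂ) : ∃ n : ℤ, z - ell w0 (Complex.exp (K * z)) = (n : ℂ) := by
  have h1 : Complex.exp (K * (z - ell w0 (Complex.exp (K * z)))) = 1 := by
    rw [mul_sub, Complex.exp_sub, exp_K_ell w0 _ (Complex.exp_ne_zero _),
      div_self (Complex.exp_ne_zero _)]
  obtain ⟨n, hn⟩ := Complex.exp_eq_one_iff.mp h1
  refine ⟨n, ?_⟩
  have h2 : (n : ℂ) * (2 * Real.pi * Complex.I) = K * n := by rw [K]; ring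
  rw [h2] at hn
  exact mul_left_cancel₀ K_ne hn

/-- The integer label of the sheet containing `z`. -/
noncomputable def N (z : ℂ) : ℤ := round ((z - ell w0 (Complex.exp (K * z))).re)

lemma N_eq (z : ℂ) : (N w0 z : ℂ) = z - ell w0 (Complex.exp (K * z)) := by
  obtain ⟨n, hn⟩ := exists_int w0 z
  have hre : (z - ell w0 (Complex.exp (K * z))).re = (n : ℝ) := by
    rw [hn]
    simp
  have : N w0 z = n := by
    rw [N, hre, round_intCast]
  rw [this, hn]

lemma N_spec (w : C0) (n : ℤ) : N w0 (ell w0 w.val + n) = n := by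
  have h1 : Complex.exp (K * (ell w0 w.val + n)) = w.val := congrArg Subtype.val (p_ell_add w0 w n)
  have h2 : ((N w0 (ell w0 w.val + n) : ℤ) : ℂ) = (n : ℂ) := by
    rw [N_eq w0 (ell w0 w.val + n), h1]
    ring
  exact_mod_cast h2

lemma continuousAt_ell {w : ℂ} (hw : w / w0.val ∈ Complex.slitPlane) :
    ContinuousAt (ell w0) w := by
  have h1 : ContinuousAt (fun w : ℂ => w / w0.val) w := continuousAt_id.div_const _
  have h2 : ContinuousAt Complex.log (w / w0.val) := continuousAt_clog hw
  have h3 : ContinuousAt (Complex.log ∘ fun w : ℂ => w / w0.val) w 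
    := ContinuousAt.comp (f := fun w : ℂ => w / w0.val) (x := w) h2 h1
  exact (continuousAt_const.add h3).div_const _

lemma contOn_toFun : ContinuousOn (fun z => (p z, N w0 z)) (p ⁻¹' U w0) := by
  intro z0 hz0
  refine ContinuousAt.continuousWithinAt ?_
  refine ContinuousAt.prodMk (continuous_p.continuousAt) ?_
  have hz0' : Complex.exp (K * z0) / w0.val ∈ Complex.slitPlane := hz0
  have hd : ContinuousAt (fun z => z - ell w0 (Complex.exp (K * z))) z0 := by
    refine ContinuousAt.sub continuousAt_id ?_
    have hA : ContinuousAt (fun z : ℂ => Complex.exp (K * z)) z0 :=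
      (Complex.continuous_exp.comp (continuous_const.mul continuous_id)).continuousAt
    exact ContinuousAt.comp (x := z0) (g := ell w0) (continuousAt_ell w0 hz0') hA
  have hev : ∀ᶠ z in 𝓝 z0, N w0 z = N w0 z0 := by
    have hball : {z : ℂ | z - ell w0 (Complex.exp (K * z)) ∈
        Metric.ball ((N w0 z0 : ℤ) : ℂ) (1/2)} ∈ 𝓝 z0 := by
      refine hd (Metric.isOpen_ball.mem_nhds ?_)
      show z0 - ell w0 (Complex.exp (K * z0)) ∈ Metric.ball _ _
      rw [← N_eq w0 z0]
      exact Metric.mem_ball_self (by norm_num)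
    filter_upwards [hball] with z hz
    have h1 : ((N w0 z : ℤ) : ℂ) ∈ Metric.ball ((N w0 z0 : ℤ) : ℂ) (1/2) := by
      rw [N_eq w0 z]; exact hz
    rw [Metric.mem_ball] at h1
    by_contra hne
    have hint : (1 : ℝ) ≤ |(N w0 z - N w0 z0 : ℤ)| := by
      exact_mod_cast Int.one_le_abs (sub_ne_zero.mpr hne)
    have h2 : dist ((N w0 z : ℤ) : ℂ) ((N w0 z0 : ℤ) : ℂ) = |((N w0 z - N w0 z0 : ℤ) : ℝ)| := by
      rw [Complex.dist_eq]
      push_cast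
      rw [← Real.norm_eq_abs, ← Complex.norm_real]
      norm_num
    rw [h2] at h1
    push_cast at hint h1
    linarith
  exact continuousAt_const.congr (hev.mono fun z hz => hz.symm)

lemma contOn_invFun :
    ContinuousOn (fun q : C0 × ℤ => ell w0 q.1.val + (q.2 : ℂ)) (U w0 ×ˢ Set.univ) := by
  intro q hq
  refine ContinuousAt.continuousWithinAt ?_
  refine ContinuousAt.add ?_ ?_
  · have h1 : ContinuousAt (fun q : C0 × ℤ => (q.1.val : ℂ)) q :=
      (continuous_subtype_val.comp continuous_fst).continuousAt
    have hq1 : q.1.val / w0.val ∈ Complex.slitPlane := hq.1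
    exact ContinuousAt.comp (f := fun q : C0 × ℤ => (q.1.val : ℂ)) (x := q)
      (continuousAt_ell w0 hq1) h1
  · exact ((continuous_of_discreteTopology (f := fun n : ℤ => (n : ℂ))).comp
      continuous_snd).continuousAt

/-- The trivialization of `p` over `U w0`. -/
noncomputable def T : Bundle.Trivialization ℤ p where
  toFun z := (p z, N w0 z)
  invFun q := ell w0 q.1.val + q.2
  source := p ⁻¹' U w0
  target := U w0 ×ˢ Set.univ
  map_source' z hz := ⟨hz, trivial⟩
  map_target' q hq := by
    have h := p_ell_add w0 q.1 q.2
    show p (ell w0 q.1.val + q.2) ∈ U w0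
    rw [h]
    exact hq.1
  left_inv' z _ := by
    show ell w0 (p z).val + (N w0 z : ℂ) = z
    have h := N_eq w0 z
    show ell w0 (Complex.exp (K * z)) + (N w0 z : ℂ) = z
    rw [h]
    ring
  right_inv' q hq := by
    have h1 := p_ell_add w0 q.1 q.2
    have h2 := N_spec w0 q.1 q.2
    show (p (ell w0 q.1.val + q.2), N w0 (ell w0 q.1.val + q.2)) = q
    rw [h1, h2]
  open_source := (isOpen_U w0).preimage continuous_p
  open_target := (isOpen_U w0).prod isOpen_univ
  continuousOn_toFun := contOn_toFun w0
  continuousOn_invFun := contOn_invFun w0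
  baseSet := U w0
  open_baseSet := isOpen_U w0
  source_eq := rfl
  target_eq := rfl
  proj_toFun z _ := rfl

theorem isCoveringMap_p : IsCoveringMap p :=
  IsCoveringMap.mk p (fun _ => ℤ) (fun w => T w) fun w => mem_U_self w

/-! ### Covering maps compose with homeomorphisms of the base -/

/-- Transfer a trivialization along a homeomorphism of the base. -/
def transBaseTriv {E X Y I : Type*} [TopologicalSpace E] [TopologicalSpace X]
    [TopologicalSpace Y] [TopologicalSpace I] {f : E → X} (t : Bundle.Trivialization I f)
    (h : X ≃ₜ Y) : Bundle.Trivialization I (fun z => h (f z)) where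
  toOpenPartialHomeomorph := t.toOpenPartialHomeomorph.transHomeomorph (h.prodCongr (Homeomorph.refl I))
  baseSet := h.symm ⁻¹' t.baseSet
  open_baseSet := t.open_baseSet.preimage h.symm.continuous
  source_eq := by
    show t.source = _
    rw [t.source_eq]
    ext z
    simp
  target_eq := by
    show (h.prodCongr (Homeomorph.refl I)).symm ⁻¹' t.target = _
    rw [t.target_eq]
    ext q
    simp
  proj_toFun z hz := by
    show h (t z).1 = h (f z)
    exact congrArg h (t.proj_toFun z hz)

theorem isCoveringMap_comp_homeomorph {E X Y : Type*} [TopologicalSpace E] [TopologicalSpace X]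
    [TopologicalSpace Y] {f : E → X} (hf : IsCoveringMap f) (h : X ≃ₜ Y) :
    IsCoveringMap (fun z => h (f z)) := by
  exact hf.homeomorph_comp h

/-! ### The Möbius homeomorphism from the punctured plane to `ℙ¹ ∖ {±1}` -/

/-- The target set `ℙ¹ ∖ {±1}`. -/
def S : Set (OnePoint ℂ) :=
  {w : OnePoint ℂ | w ≠ ((1 : ℂ) : OnePoint ℂ) ∧ w ≠ ((-1 : ℂ) : OnePoint ℂ)}

lemma M_mem (c : ℂ) (hc : c ≠ 0) : M (c : OnePoint ℂ) ∈ S := by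
  by_cases h : 1 + c = 0
  · rw [M_coe, if_pos h]
    exact ⟨fun he => (OnePoint.infty_ne_coe _) he, fun he => (OnePoint.infty_ne_coe _) he⟩
  · rw [M_coe, if_neg h]
    constructor
    · intro he
      rw [OnePoint.coe_eq_coe, div_eq_one_iff_eq h] at he
      exact hc (by linear_combination -he/2)
    · intro he
      rw [OnePoint.coe_eq_coe, div_eq_iff h] at he
      have : (2 : ℂ) = 0 := by linear_combination he
      norm_num at this

/-- Extract the finite part of a point of `ℙ¹`; junk value at `∞`. -/
noncomputable def toC : OnePoint ℂ → ℂ := fun w => w.elim 0 id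

@[simp] lemma toC_coe (c : ℂ) : toC (c : OnePoint ℂ) = c := rfl

lemma M_of_mem {w : OnePoint ℂ} (hw : w ∈ S) :
    ((toC (M w) : ℂ) : OnePoint ℂ) = M w ∧ toC (M w) ≠ 0 := by
  induction w using OnePoint.rec with
  | infty =>
    rw [M_infty]
    refine ⟨rfl, ?_⟩
    rw [toC_coe]
    norm_num
  | coe c =>
    have h1 : c ≠ -1 := fun h => hw.2 (by rw [h])
    have hden : 1 + c ≠ 0 := fun h => h1 (by linear_combination h)
    have h2 : c ≠ 1 := fun h => hw.1 (by rw [h])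
    rw [M_coe, if_neg hden]
    refine ⟨rfl, ?_⟩
    rw [toC_coe]
    exact div_ne_zero (sub_ne_zero.mpr (fun h => h2 h.symm)) hden

/-- The Möbius homeomorphism from the punctured plane to `ℙ¹ ∖ {±1}`. -/
noncomputable def E0 : C0 ≃ₜ ↥S where
  toFun u := ⟨M (u.val : OnePoint ℂ), M_mem u.val u.2⟩
  invFun w := ⟨toC (M w.val), (M_of_mem w.2).2⟩
  left_inv u := by
    refine Subtype.ext ?_
    show toC (M (M (u.val : OnePoint ℂ))) = u.val
    rw [M_M, toC_coe]
  right_inv w := by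
    refine Subtype.ext ?_
    show M ((toC (M w.val) : ℂ) : OnePoint ℂ) = w.val
    rw [(M_of_mem w.2).1, M_M]
  continuous_toFun := by
    refine Continuous.subtype_mk ?_ _
    exact continuous_M.comp (OnePoint.continuous_coe.comp continuous_subtype_val)
  continuous_invFun := by
    refine Continuous.subtype_mk ?_ _
    rw [OnePoint.isOpenEmbedding_coe.isInducing.continuous_iff]
    have heq : (fun w : ↥S => ((toC (M w.val) : ℂ) : OnePoint ℂ)) =
        fun w : ↥S => M w.val := by
      funext w
      exact (M_of_mem w.2).1
    show Continuous (fun w : ↥S => ((toC (M w.val) : ℂ) : OnePoint ℂ))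
    rw [heq]
    exact continuous_M.comp continuous_subtype_val

end Stmt8Aux

theorem stmt_8 :
    ∃ h : ∀ z : ℂ, G z ∈ {w : OnePoint ℂ | w ≠ ((1 : ℂ) : OnePoint ℂ) ∧
        w ≠ ((-1 : ℂ) : OnePoint ℂ)},
      IsCoveringMap
        (Set.codRestrict G
          {w : OnePoint ℂ | w ≠ ((1 : ℂ) : OnePoint ℂ) ∧ w ≠ ((-1 : ℂ) : OnePoint ℂ)} h) := by
  have hGM : ∀ z : ℂ, G z = Stmt8Aux.M ((Complex.exp (Stmt8Aux.K * z) : ℂ) : OnePoint ℂ) :=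
    fun z => rfl
  have hmem : ∀ z : ℂ, G z ∈ {w : OnePoint ℂ | w ≠ ((1 : ℂ) : OnePoint ℂ) ∧
      w ≠ ((-1 : ℂ) : OnePoint ℂ)} := fun z => by
    rw [hGM z]
    exact Stmt8Aux.M_mem _ (Complex.exp_ne_zero _)
  refine ⟨hmem, ?_⟩
  have hfun : Set.codRestrict G
      {w : OnePoint ℂ | w ≠ ((1 : ℂ) : OnePoint ℂ) ∧ w ≠ ((-1 : ℂ) : OnePoint ℂ)} hmem
      = fun z => Stmt8Aux.E0 (Stmt8Aux.p z) := by
    funext z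
    refine Subtype.ext ?_
    show G z = Stmt8Aux.M (((Stmt8Aux.p z).val : ℂ) : OnePoint ℂ)
    exact hGM z
  rw [hfun]
  exact Stmt8Aux.isCoveringMap_comp_homeomorph Stmt8Aux.isCoveringMap_p Stmt8Aux.E0
end

section
/- The restriction of G to the subspace ℂ − ℤ (the complement of the integers in ℂ), with codomain the subtype {w : OnePoint ℂ // w ≠ 0 ∧ w ≠ 1 ∧ w ≠ −1}, is well defined and is a covering map. That is, ℂ − ℤ is a covering space of the stringy Kähler moduli space M = ℙ¹ − {0, 1, −1} via G. -/
open Complex OnePoint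

/-- The complement `ℂ − ℤ` of the integers in the complex plane, as a subspace. -/
def CminusZ : Type := {z : ℂ // z ∉ Set.range ((↑) : ℤ → ℂ)}

noncomputable instance : TopologicalSpace CminusZ := by unfold CminusZ; infer_instance

/-- The stringy Kähler moduli space `M = ℙ¹ − {0, 1, −1}`, as a subspace of `ℙ¹`. -/
def M : Set (OnePoint ℂ) :=
  {w : OnePoint ℂ | w ≠ ((0 : ℂ) : OnePoint ℂ) ∧ w ≠ ((1 : ℂ) : OnePoint ℂ) ∧
    w ≠ ((-1 : ℂ) : OnePoint ℂ)}

noncomputable section AuxDefs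

abbrev ZC : Type := {z : ℂ // z ∉ Set.range ((↑) : ℤ → ℂ)}

/-- abbreviation for the exponential `z ↦ exp(2πiz)`. -/
def ee (z : ℂ) : ℂ := Complex.exp (2 * Real.pi * Complex.I * z)

lemma ee_ne_zero (z : ℂ) : ee z ≠ 0 := Complex.exp_ne_zero _

lemma twoPiI_ne : (2 * (Real.pi : ℂ) * Complex.I) ≠ 0 := by
  simp [Real.pi_ne_zero, Complex.I_ne_zero, Complex.ofReal_ne_zero]

lemma ee_eq_one_iff (z : ℂ) : ee z = 1 ↔ ∃ n : ℤ, z = n := by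
  rw [ee, Complex.exp_eq_one_iff]
  constructor
  · rintro ⟨n, hn⟩
    refine ⟨n, mul_left_cancel₀ twoPiI_ne ?_⟩
    linear_combination hn
  · rintro ⟨n, rfl⟩
    exact ⟨n, by ring⟩

lemma ee_int (n : ℤ) : ee n = 1 := (ee_eq_one_iff _).2 ⟨n, rfl⟩

lemma ee_sub (a b : ℂ) : ee (a - b) = ee a / ee b := by
  rw [ee, ee, ee, ← Complex.exp_sub]
  ring_nf

lemma ee_add_int (z : ℂ) (n : ℤ) : ee (z + n) = ee z := by
  have h : ee (z + n) = ee z * ee n := by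
    rw [ee, ee, ee, ← Complex.exp_add]; ring_nf
  rw [h, ee_int, mul_one]

/-- The target of the exponential covering: `ℂ − {0, 1}`. -/
abbrev Csub : Type := {q : ℂ // q ≠ 0 ∧ q ≠ 1}

/-- The exponential covering map `ℂ − ℤ → ℂ − {0,1}`. -/
def Emap : ZC → Csub := fun z =>
  ⟨ee z.1, ee_ne_zero _, fun h => z.2 (by
    obtain ⟨n, hn⟩ := (ee_eq_one_iff z.1).1 h
    exact ⟨n, hn.symm⟩)⟩

lemma continuous_ee : Continuous ee := by
  unfold ee; fun_prop

lemma continuous_Emap : Continuous Emap := by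
  apply Continuous.subtype_mk
  exact continuous_ee.comp continuous_subtype_val

/-- junk element of `ZC`. -/
def jk : ZC := ⟨(1 : ℂ) / 2, by
  rintro ⟨n, hn⟩
  have h1 : ((n : ℂ)).re = (n : ℝ) := by simp
  have h2 : ((1 : ℂ) / 2).re = 1 / 2 := by norm_num
  rw [← hn] at h2
  rw [h1] at h2
  have h5 : (0 : ℤ) < n := by exact_mod_cast show (0:ℝ) < n by rw [h2]; norm_num
  have h6 : n < 1 := by exact_mod_cast show (n:ℝ) < 1 by rw [h2]; norm_num
  omega⟩

lemma not_int_of_ee_ne_one {z : ℂ} (h : ee z ≠ 1) : z ∉ Set.range ((↑) : ℤ → ℂ) := by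
  rintro ⟨n, rfl⟩
  exact h (ee_int n)

section Triv

variable (q₀ : Csub)

/-- branch of (1/2πi) log around q₀ -/
def sfun (q : ℂ) : ℂ :=
  (Complex.log (q / q₀.1) + Complex.log q₀.1) / (2 * Real.pi * Complex.I)

lemma ee_sfun {q : ℂ} (hq : q ≠ 0) : ee (sfun q₀ q) = q := by
  rw [ee, sfun, mul_div_cancel₀ _ twoPiI_ne, Complex.exp_add,
    Complex.exp_log (div_ne_zero hq q₀.2.1), Complex.exp_log q₀.2.1]
  exact div_mul_cancel₀ q q₀.2.1

/-- the base set of the trivialization at `q₀`. -/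
def Vset : Set Csub := {q | q.1 / q₀.1 ∈ Complex.slitPlane}

lemma isOpen_Vset : IsOpen (Vset q₀) := by
  have : Vset q₀ = (fun q : Csub => q.1 / q₀.1) ⁻¹' Complex.slitPlane := rfl
  rw [this]
  exact Complex.isOpen_slitPlane.preimage (by fun_prop)

lemma q₀_mem_Vset : q₀ ∈ Vset q₀ := by
  show q₀.1 / q₀.1 ∈ Complex.slitPlane
  rw [div_self q₀.2.1]
  exact Complex.one_mem_slitPlane

/-- The integer part function on the fiber. -/
def nfun (z : ZC) : ℤ := round ((z.1 - sfun q₀ (ee z.1)).re)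

lemma nfun_spec {z : ZC} (hz : Emap z ∈ Vset q₀) :
    (nfun q₀ z : ℂ) = z.1 - sfun q₀ (ee z.1) := by
  have h1 : ee (z.1 - sfun q₀ (ee z.1)) = 1 := by
    rw [ee_sub, ee_sfun q₀ (ee_ne_zero z.1), div_self (ee_ne_zero z.1)]
  obtain ⟨m, hm⟩ := (ee_eq_one_iff _).1 h1
  rw [nfun, hm]
  norm_num

lemma sfun_continuousAt {q : ℂ} (hq : q / q₀.1 ∈ Complex.slitPlane) :
    ContinuousAt (sfun q₀) q := by
  unfold sfun
  apply ContinuousAt.div_const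
  apply ContinuousAt.add _ continuousAt_const
  exact ContinuousAt.comp (g := Complex.log) (f := fun w => w / q₀.1)
    (continuousAt_clog hq) ((continuous_id.div_const q₀.1).continuousAt)

attribute [local instance] Classical.propDecidable

/-- The local trivialization of `Emap` at `q₀`. -/
def trivE : Bundle.Trivialization ℤ Emap where
  toFun z := (Emap z, nfun q₀ z)
  invFun p := if h : p.1.1 / q₀.1 ∈ Complex.slitPlane then
      ⟨sfun q₀ p.1.1 + p.2, not_int_of_ee_ne_one (by
        rw [ee_add_int, ee_sfun q₀ p.1.2.1]; exact p.1.2.2)⟩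
    else jk
  source := Emap ⁻¹' Vset q₀
  target := Vset q₀ ×ˢ Set.univ
  map_source' z hz := ⟨hz, Set.mem_univ _⟩
  map_target' := by
    rintro ⟨q, k⟩ ⟨hq, -⟩
    have hq' : q.1 / q₀.1 ∈ Complex.slitPlane := hq
    simp only [dif_pos hq']
    show ee (sfun q₀ q.1 + (k : ℂ)) / q₀.1 ∈ Complex.slitPlane
    rw [ee_add_int, ee_sfun q₀ q.2.1]
    exact hq
  left_inv' := by
    intro z hz
    have hq' : (Emap z).1 / q₀.1 ∈ Complex.slitPlane := hz
    simp only [dif_pos hq']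
    apply Subtype.ext
    show sfun q₀ (Emap z).1 + (nfun q₀ z : ℂ) = z.1
    rw [nfun_spec q₀ hz]
    show sfun q₀ (ee z.1) + _ = z.1
    ring
  right_inv' := by
    rintro ⟨q, k⟩ ⟨hq, -⟩
    have hq' : q.1 / q₀.1 ∈ Complex.slitPlane := hq
    simp only [dif_pos hq']
    have h1 : ee (sfun q₀ q.1 + (k : ℂ)) = q.1 := by rw [ee_add_int, ee_sfun q₀ q.2.1]
    refine Prod.ext (Subtype.ext ?_) ?_
    · exact h1
    · show round ((sfun q₀ q.1 + (k : ℂ) - sfun q₀ (ee (sfun q₀ q.1 + (k : ℂ)))).re) = k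
      rw [h1]
      have h2 : sfun q₀ q.1 + (k : ℂ) - sfun q₀ q.1 = (k : ℂ) := by ring
      rw [h2]
      norm_num
  open_source := (isOpen_Vset q₀).preimage continuous_Emap
  open_target := (isOpen_Vset q₀).prod isOpen_univ
  continuousOn_toFun := by
    apply ContinuousOn.prodMk (continuous_Emap.continuousOn)
    intro z hz
    rw [ContinuousWithinAt, nhds_discrete, Filter.tendsto_pure]
    have hcont : ContinuousWithinAt (fun w : ZC => w.1 - sfun q₀ (ee w.1))
        (Emap ⁻¹' Vset q₀) z := by
      apply ContinuousWithinAt.sub continuous_subtype_val.continuousWithinAt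
      exact (ContinuousAt.comp (g := sfun q₀) (f := fun w : ZC => ee w.1) (x := z)
        (sfun_continuousAt q₀ hz)
        ((continuous_ee.comp continuous_subtype_val).continuousAt)).continuousWithinAt
    have hball := hcont (Metric.ball_mem_nhds (z.1 - sfun q₀ (ee z.1)) (by norm_num : (0:ℝ) < 1/2))
    filter_upwards [hball, self_mem_nhdsWithin] with w hw hw'
    have h1 : ((nfun q₀ w : ℂ)) = w.1 - sfun q₀ (ee w.1) := nfun_spec q₀ hw'
    have h2 : ((nfun q₀ z : ℂ)) = z.1 - sfun q₀ (ee z.1) := nfun_spec q₀ hz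
    have hd : dist ((nfun q₀ w : ℂ)) ((nfun q₀ z : ℂ)) < 1/2 := by
      rw [h1, h2]; exact hw
    have h3 : (nfun q₀ w : ℂ) = (nfun q₀ z : ℂ) := by
      by_contra hne
      have hne' : nfun q₀ w ≠ nfun q₀ z := fun h => hne (by rw [h])
      have h4 : (1 : ℝ) ≤ dist ((nfun q₀ w : ℂ)) ((nfun q₀ z : ℂ)) := by
        rw [Complex.dist_eq]
        have h5 : ((nfun q₀ w : ℂ)) - ((nfun q₀ z : ℂ)) = ((nfun q₀ w - nfun q₀ z : ℤ) : ℂ) := by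
          push_cast; ring
        rw [h5]
        have h0 : nfun q₀ w - nfun q₀ z ≠ 0 := sub_ne_zero.2 hne'
        calc (1 : ℝ) ≤ |((nfun q₀ w - nfun q₀ z : ℤ) : ℝ)| := by
              exact_mod_cast Int.one_le_abs h0
          _ = ‖((nfun q₀ w - nfun q₀ z : ℤ) : ℂ)‖ := by
              rw [Complex.norm_intCast]
      linarith
    exact_mod_cast h3
  continuousOn_invFun := by
    rw [IsOpen.continuousOn_iff ((isOpen_Vset q₀).prod isOpen_univ)]
    intro p hp
    apply Topology.IsInducing.subtypeVal.continuousAt_iff.mpr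
    have hev : ∀ᶠ w : Csub × ℤ in nhds p, w.1.1 / q₀.1 ∈ Complex.slitPlane := by
      have hopen : IsOpen {w : Csub × ℤ | w.1.1 / q₀.1 ∈ Complex.slitPlane} :=
        Complex.isOpen_slitPlane.preimage (by fun_prop)
      exact hopen.mem_nhds hp.1
    apply ContinuousAt.congr (f := fun w : Csub × ℤ => sfun q₀ w.1.1 + (w.2 : ℂ))
    · apply ContinuousAt.add
      · exact ContinuousAt.comp (g := sfun q₀) (sfun_continuousAt q₀ hp.1) (by fun_prop)
      · exact Continuous.continuousAt
          ((continuous_of_discreteTopology (f := fun n : ℤ => (n : ℂ))).comp continuous_snd)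
    · filter_upwards [hev] with w hw
      simp only [Function.comp_apply, dif_pos hw]
  baseSet := Vset q₀
  open_baseSet := isOpen_Vset q₀
  source_eq := rfl
  target_eq := rfl
  proj_toFun z _ := rfl

end Triv

lemma isCoveringMap_Emap : IsCoveringMap Emap :=
  IsFiberBundle.isCoveringMap fun q => ⟨trivE q, q₀_mem_Vset q⟩

end AuxDefs

/-! ### The Möbius involution on `ℙ¹` -/

noncomputable section Aux2

/-- The Möbius involution `w ↦ (1-w)/(1+w)` on the one-point compactification of `ℂ`. -/
def mO : OnePoint ℂ → OnePoint ℂ := fun w =>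
  OnePoint.elim w (((-1 : ℂ) : OnePoint ℂ))
    (fun c => if 1 + c = 0 then ∞ else (((1 - c) / (1 + c) : ℂ) : OnePoint ℂ))

lemma mO_infty : mO ∞ = ((-1 : ℂ) : OnePoint ℂ) := rfl

lemma mO_coe (c : ℂ) : mO ((c : OnePoint ℂ)) =
    if 1 + c = 0 then ∞ else (((1 - c) / (1 + c) : ℂ) : OnePoint ℂ) := rfl

lemma mO_invol : ∀ w, mO (mO w) = w := by
  intro w
  induction w using OnePoint.rec with
  | infty =>
    rw [mO_infty, mO_coe, if_pos (by ring)]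
  | coe c =>
    rw [mO_coe]
    by_cases hc : 1 + c = 0
    · rw [if_pos hc, mO_infty]
      congr 1
      linear_combination -hc
    · rw [if_neg hc, mO_coe]
      have h2 : 1 + (1 - c) / (1 + c) = 2 / (1 + c) := by field_simp; ring
      have h2' : ¬(1 + (1 - c) / (1 + c) = 0) := by
        rw [h2]
        exact div_ne_zero two_ne_zero hc
      rw [if_neg h2']
      congr 1
      rw [h2]
      field_simp
      ring

lemma continuous_mO : Continuous mO := by
  rw [OnePoint.continuous_iff]
  have hccc : Filter.coclosedCompact ℂ = Bornology.cobounded ℂ := by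
    rw [Filter.coclosedCompact_eq_cocompact, Metric.cobounded_eq_cocompact]
  constructor
  · -- behavior at ∞ : tends to -1
    rw [mO_infty, hccc]
    have hinv : Filter.Tendsto (fun c : ℂ => (c⁻¹ - 1) / (c⁻¹ + 1)) (Bornology.cobounded ℂ)
        (nhds (-1)) := by
      have hc : ContinuousAt (fun u : ℂ => (u - 1) / (u + 1)) 0 := by
        apply ContinuousAt.div (by fun_prop) (by fun_prop)
        norm_num
      have hc' : Filter.Tendsto (fun u : ℂ => (u - 1) / (u + 1)) (nhds 0) (nhds (-1)) := by
        have h := hc.tendsto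
        norm_num at h
        exact h
      exact hc'.comp Filter.tendsto_inv₀_cobounded
    have heq : ∀ᶠ c : ℂ in Bornology.cobounded ℂ,
        (c⁻¹ - 1) / (c⁻¹ + 1) = (1 - c) / (1 + c) := by
      filter_upwards [eventually_cobounded_le_norm 2] with c hc
      have hc0 : c ≠ 0 := by
        intro h; rw [h] at hc; norm_num at hc
      have hc1 : 1 + c ≠ 0 := by
        intro h
        rw [show c = -1 by linear_combination h] at hc
        norm_num at hc
      field_simp
    have hmain : Filter.Tendsto (fun c : ℂ => ((1 - c) / (1 + c) : ℂ)) (Bornology.cobounded ℂ)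
        (nhds (-1)) := hinv.congr' heq
    have hev : ∀ᶠ c : ℂ in Bornology.cobounded ℂ,
        (((1 - c) / (1 + c) : ℂ) : OnePoint ℂ) = mO c := by
      filter_upwards [eventually_cobounded_le_norm 2] with c hc
      have hc1 : 1 + c ≠ 0 := by
        intro h
        rw [show c = -1 by linear_combination h] at hc
        norm_num at hc
      rw [mO_coe, if_neg hc1]
    exact (((OnePoint.continuous_coe).continuousAt.tendsto).comp hmain).congr' hev
  · -- continuity on ℂ
    rw [continuous_iff_continuousAt]
    intro c₀
    by_cases hc₀ : 1 + c₀ = 0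
    · -- tends to ∞ at c₀ = -1
      have hc₀' : c₀ = -1 := by linear_combination hc₀
      subst hc₀'
      have hval : mO ((-1 : ℂ) : OnePoint ℂ) = ∞ := by rw [mO_coe, if_pos (by ring)]
      rw [ContinuousAt]
      rw [hval, ← nhdsNE_sup_pure (-1 : ℂ), Filter.tendsto_sup]
      constructor
      · -- within the punctured neighborhood
        have hden : Filter.Tendsto (fun c : ℂ => ‖1 + c‖) (nhdsWithin (-1) {(-1 : ℂ)}ᶜ)
            (nhdsWithin 0 (Set.Ioi (0:ℝ))) := by
          rw [tendsto_nhdsWithin_iff]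
          constructor
          · have h : Filter.Tendsto (fun c : ℂ => ‖1 + c‖) (nhds (-1 : ℂ)) (nhds 0) := by
              have h0 := (Continuous.tendsto
                (by fun_prop : Continuous fun c : ℂ => ‖1 + c‖) (-1 : ℂ))
              norm_num at h0
              exact h0
            exact h.mono_left nhdsWithin_le_nhds
          · filter_upwards [self_mem_nhdsWithin] with c hc
            have h1 : 1 + c ≠ 0 := by
              intro h
              exact hc (Set.mem_singleton_iff.mpr (by linear_combination h))
            simpa using h1
        have hdeninv : Filter.Tendsto (fun c : ℂ => ‖1 + c‖⁻¹)
            (nhdsWithin (-1) {(-1 : ℂ)}ᶜ) Filter.atTop :=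
          tendsto_inv_nhdsGT_zero.comp hden
        have hnum : Filter.Tendsto (fun c : ℂ => ‖1 - c‖) (nhdsWithin (-1) {(-1 : ℂ)}ᶜ)
            (nhds 2) := by
          have h : Filter.Tendsto (fun c : ℂ => ‖1 - c‖) (nhds (-1 : ℂ)) (nhds 2) := by
            have h0 := (Continuous.tendsto
              (by fun_prop : Continuous fun c : ℂ => ‖1 - c‖) (-1 : ℂ))
            norm_num at h0
            exact h0
          exact h.mono_left nhdsWithin_le_nhds
        have hprod : Filter.Tendsto (fun c : ℂ => ‖1 - c‖ * ‖1 + c‖⁻¹)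
            (nhdsWithin (-1) {(-1 : ℂ)}ᶜ) Filter.atTop :=
          Filter.Tendsto.pos_mul_atTop two_pos hnum hdeninv
        have hnorm : Filter.Tendsto (fun c : ℂ => ‖(1 - c) / (1 + c)‖)
            (nhdsWithin (-1) {(-1 : ℂ)}ᶜ) Filter.atTop := by
          refine hprod.congr (fun c => ?_)
          rw [norm_div, div_eq_mul_inv]
        have hcob : Filter.Tendsto (fun c : ℂ => (1 - c) / (1 + c))
            (nhdsWithin (-1) {(-1 : ℂ)}ᶜ) (Bornology.cobounded ℂ) :=
          tendsto_norm_atTop_iff_cobounded.1 hnorm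
        have hinf : Filter.Tendsto (fun c : ℂ => (((1 - c) / (1 + c) : ℂ) : OnePoint ℂ))
            (nhdsWithin (-1) {(-1 : ℂ)}ᶜ) (nhds ∞) := by
          apply OnePoint.tendsto_coe_infty.comp
          rwa [hccc]
        refine hinf.congr' ?_
        filter_upwards [self_mem_nhdsWithin] with c hc
        have h1 : 1 + c ≠ 0 := by
          intro h
          exact hc (Set.mem_singleton_iff.mpr (by linear_combination h))
        rw [mO_coe, if_neg h1]
      · -- at the point itself
        rw [Filter.tendsto_pure_left]
        intro s hs
        show mO ((-1 : ℂ) : OnePoint ℂ) ∈ s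
        rw [hval]
        exact mem_of_mem_nhds hs
    · -- ordinary point
      have hev : ∀ᶠ c : ℂ in nhds c₀, 1 + c ≠ 0 := by
        have : ContinuousAt (fun c : ℂ => 1 + c) c₀ := by fun_prop
        exact this.eventually_ne hc₀
      have hg : ContinuousAt (fun c : ℂ => (((1 - c) / (1 + c) : ℂ) : OnePoint ℂ)) c₀ := by
        apply (OnePoint.continuous_coe).continuousAt.comp
        exact ContinuousAt.div (by fun_prop) (by fun_prop) hc₀
      refine hg.congr ?_
      filter_upwards [hev] with c hc
      rw [mO_coe, if_neg hc]

/-- The Möbius involution as a homeomorphism of `ℙ¹`. -/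
def mH : OnePoint ℂ ≃ₜ OnePoint ℂ where
  toFun := mO
  invFun := mO
  left_inv := mO_invol
  right_inv := mO_invol
  continuous_toFun := continuous_mO
  continuous_invFun := continuous_mO

/-- The composite `ℂ → ℙ¹`, `q ↦ mO q`. -/
def fCM : ℂ → OnePoint ℂ := fun q => mO ((q : OnePoint ℂ))

lemma isOpenEmbedding_fCM : Topology.IsOpenEmbedding fCM :=
  (mH.isOpenEmbedding).comp OnePoint.isOpenEmbedding_coe

lemma mO_mem_M {q : ℂ} (h0 : q ≠ 0) (h1 : q ≠ 1) : fCM q ∈ M := by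
  rw [M, Set.mem_setOf_eq]
  show mO _ ≠ _ ∧ mO _ ≠ _ ∧ mO _ ≠ _
  rw [mO_coe]
  by_cases hc : 1 + q = 0
  · rw [if_pos hc]
    exact ⟨(OnePoint.infty_ne_coe _), (OnePoint.infty_ne_coe _), (OnePoint.infty_ne_coe _)⟩
  · rw [if_neg hc]
    refine ⟨?_, ?_, ?_⟩
    · intro h
      rw [OnePoint.coe_eq_coe, div_eq_iff hc] at h
      exact h1 (by linear_combination -h)
    · intro h
      rw [OnePoint.coe_eq_coe, div_eq_iff hc] at h
      exact h0 (by linear_combination -h/2)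
    · intro h
      rw [OnePoint.coe_eq_coe, div_eq_iff hc] at h
      have : (2 : ℂ) = 0 := by linear_combination h
      norm_num at this

lemma fCM_zero : fCM 0 = ((1 : ℂ) : OnePoint ℂ) := by
  rw [fCM, mO_coe, if_neg (by norm_num)]
  norm_num

lemma fCM_one : fCM 1 = ((0 : ℂ) : OnePoint ℂ) := by
  rw [fCM, mO_coe, if_neg (by norm_num)]
  norm_num

lemma M_sub_range : ∀ w ∈ M, w ∈ Set.range fCM := by
  intro w hw
  induction w using OnePoint.rec with
  | infty =>
    exact ⟨-1, by rw [fCM, mO_coe, if_pos (by ring)]⟩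
  | coe c =>
    have hc1 : 1 + c ≠ 0 := by
      intro h
      exact hw.2.2 (by rw [show c = -1 by linear_combination h])
    refine ⟨(1 - c) / (1 + c), ?_⟩
    have h : ((((1 - c) / (1 + c) : ℂ)) : OnePoint ℂ) = mO ((c : OnePoint ℂ)) := by
      rw [mO_coe, if_neg hc1]
    rw [fCM, h]
    exact mO_invol _

/-- The partial homeomorphism associated to the open embedding `fCM`. -/
def PH : OpenPartialHomeomorph ℂ (OnePoint ℂ) :=
  Topology.IsOpenEmbedding.toOpenPartialHomeomorph fCM isOpenEmbedding_fCM

lemma PH_right_inv {w : OnePoint ℂ} (hw : w ∈ Set.range fCM) : fCM (PH.symm w) = w :=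
  Topology.IsOpenEmbedding.toOpenPartialHomeomorph_right_inv fCM isOpenEmbedding_fCM hw

lemma PH_left_inv {q : ℂ} : PH.symm (fCM q) = q :=
  Topology.IsOpenEmbedding.toOpenPartialHomeomorph_left_inv fCM isOpenEmbedding_fCM

lemma PH_target : PH.target = Set.range fCM :=
  Topology.IsOpenEmbedding.toOpenPartialHomeomorph_target fCM isOpenEmbedding_fCM

/-- The restriction of the Möbius involution as a homeomorphism `ℂ − {0,1} ≃ M`. -/
def homeoCM : Csub ≃ₜ {w : OnePoint ℂ // w ∈ M} where
  toFun q := ⟨fCM q.1, mO_mem_M q.2.1 q.2.2⟩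
  invFun w := ⟨PH.symm w.1, by
    have hr : w.1 ∈ Set.range fCM := M_sub_range w.1 w.2
    have hf : fCM (PH.symm w.1) = w.1 := PH_right_inv hr
    constructor
    · intro h0
      rw [h0, fCM_zero] at hf
      exact w.2.2.1 hf.symm
    · intro h1
      rw [h1, fCM_one] at hf
      exact w.2.1 hf.symm⟩
  left_inv q := Subtype.ext PH_left_inv
  right_inv w := Subtype.ext (PH_right_inv (M_sub_range w.1 w.2))
  continuous_toFun := by
    apply Continuous.subtype_mk
    exact (continuous_mO.comp OnePoint.continuous_coe).comp continuous_subtype_val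
  continuous_invFun := by
    apply Continuous.subtype_mk
    apply PH.continuousOn_symm.comp_continuous continuous_subtype_val
    intro w
    rw [PH_target]
    exact M_sub_range w.1 w.2

/-- Transport of a trivialization along a homeomorphism of the base. -/
def trivTransBase {F E X Y : Type*} [TopologicalSpace F] [TopologicalSpace E]
    [TopologicalSpace X] [TopologicalSpace Y] {g : E → X} (t : Bundle.Trivialization F g)
    (h : X ≃ₜ Y) : Bundle.Trivialization F (fun e => h (g e)) where
  toOpenPartialHomeomorph := t.toOpenPartialHomeomorph.transHomeomorph (h.prodCongr (Homeomorph.refl F))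
  baseSet := h.symm ⁻¹' t.baseSet
  open_baseSet := t.open_baseSet.preimage h.symm.continuous
  source_eq := by
    show t.source = _
    rw [t.source_eq]
    ext e
    simp
  target_eq := by
    show (h.prodCongr (Homeomorph.refl F)).symm ⁻¹' t.target = _
    rw [t.target_eq]
    ext p
    simp [Homeomorph.prodCongr]
  proj_toFun p hp := by
    have hp' : p ∈ t.source := hp
    have h1 : (t p).1 = g p := t.proj_toFun p hp'
    show ((h.prodCongr (Homeomorph.refl F)) (t p)).1 = h (g p)
    simp [Homeomorph.prodCongr, h1]

/-- A covering map composed with a homeomorphism of the base is a covering map. -/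
lemma isCoveringMap_comp_homeomorph {E X Y : Type*} [TopologicalSpace E] [TopologicalSpace X]
    [TopologicalSpace Y] {g : E → X} (hg : IsCoveringMap g) (h : X ≃ₜ Y) :
    IsCoveringMap (fun e => h (g e)) := by
  intro y
  exact (h.apply_symm_apply y ▸ ((hg (h.symm y)).homeomorph_comp h)).to_isEvenlyCovered_preimage

end Aux2

noncomputable section Assemble

lemma G_eq_mO (z : ℂ) : G z = mO (((ee z : ℂ)) : OnePoint ℂ) := by
  by_cases h : 1 + ee z = 0
  · rw [G, mO_coe, if_pos h, if_pos (by rw [← ee]; exact h)]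
  · rw [G, mO_coe, if_neg h, if_neg (by rw [← ee]; exact h)]
    rfl

lemma hmemG : ∀ z : ZC, G z.1 ∈ M := fun z => by
  rw [G_eq_mO]
  exact mO_mem_M (ee_ne_zero z.1) (fun h => z.2 (by
    obtain ⟨n, hn⟩ := (ee_eq_one_iff z.1).1 h
    exact ⟨n, hn.symm⟩))

theorem stmt_9 :
    ∃ h : ∀ z : CminusZ, G z.1 ∈ M,
      IsCoveringMap (Set.codRestrict (fun z : CminusZ => G z.1) M h) := by
  refine ⟨hmemG, ?_⟩
  have hcov : IsCoveringMap (fun z : ZC => homeoCM (Emap z)) :=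
    isCoveringMap_comp_homeomorph isCoveringMap_Emap homeoCM
  have heq : (Set.codRestrict (fun z : ZC => G z.1) M hmemG)
      = (fun z : ZC => homeoCM (Emap z)) := by
    funext z
    apply Subtype.ext
    rw [Set.val_codRestrict_apply]
    show G z.1 = fCM (ee z.1)
    rw [G_eq_mO]
    rfl
  show IsCoveringMap (Set.codRestrict (fun z : ZC => G z.1) M hmemG)
  rw [heq]
  exact hcov

end Assemble
end

section
/- Let ℤ act on the subspace ℂ − ℤ of ℂ by translation, n · z = z + n. Then G induces a well-defined bijection from the orbit space (ℂ − ℤ)/ℤ onto the subtype {w : OnePoint ℂ // w ≠ 0 ∧ w ≠ 1 ∧ w ≠ −1}. That is, the stringy Kähler moduli space M = ℙ¹ − {0, 1, −1} is the quotient of ℂ − ℤ by the natural ℤ-action, with quotient map induced by G. -/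
open Complex OnePoint

/-- The equivalence relation on `ℂ − ℤ` whose classes are the orbits of the
`ℤ`-action by translation, `n · z = z + n`. -/
def transSetoid : Setoid CminusZ where
  r z w := ∃ n : ℤ, w.1 = z.1 + (n : ℂ)
  iseqv := by
    refine ⟨fun z => ⟨0, by simp⟩, ?_, ?_⟩
    · rintro z w ⟨n, hn⟩
      exact ⟨-n, by rw [hn]; push_cast; ring⟩
    · rintro z w v ⟨n, hn⟩ ⟨m, hm⟩
      exact ⟨n + m, by rw [hm, hn]; push_cast; ring⟩

namespace Aux

lemma two_pi_I_ne : (2 * (Real.pi : ℂ) * Complex.I) ≠ 0 :=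
  mul_ne_zero (mul_ne_zero two_ne_zero (Complex.ofReal_ne_zero.mpr Real.pi_ne_zero))
    Complex.I_ne_zero

lemma exp_eq_one_iff_int (z : ℂ) :
    Complex.exp (2 * Real.pi * Complex.I * z) = 1 ↔ ∃ n : ℤ, z = n := by
  rw [Complex.exp_eq_one_iff]
  constructor
  · rintro ⟨n, hn⟩
    refine ⟨n, ?_⟩
    have : (2 * (Real.pi : ℂ) * Complex.I) * z = (2 * (Real.pi : ℂ) * Complex.I) * n := by
      rw [hn]; ring
    exact mul_left_cancel₀ two_pi_I_ne this
  · rintro ⟨n, hn⟩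
    exact ⟨n, by rw [hn]; ring⟩

lemma Gmem (z : ℂ) (hz : z ∉ Set.range ((↑) : ℤ → ℂ)) : G z ∈ M := by
  set e := Complex.exp (2 * Real.pi * Complex.I * z) with he
  by_cases hd : 1 + e = 0
  · have : G z = OnePoint.infty := by rw [G, if_pos hd]
    rw [this]
    exact ⟨OnePoint.infty_ne_coe 0, OnePoint.infty_ne_coe 1, OnePoint.infty_ne_coe (-1)⟩
  · have hG : G z = ((1 - e) / (1 + e) : ℂ) := by rw [G, if_neg hd]
    rw [hG]
    refine ⟨?_, ?_, ?_⟩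
    · intro hc
      have hc' : (1 - e) / (1 + e) = 0 := OnePoint.coe_injective hc
      have : e = 1 := by
        have := (div_eq_zero_iff.mp hc').resolve_right hd
        linear_combination -this
      obtain ⟨n, hn⟩ := (exp_eq_one_iff_int z).mp this
      exact hz ⟨n, hn.symm⟩
    · intro hc
      have hc' : (1 - e) / (1 + e) = 1 := OnePoint.coe_injective hc
      have he0 : e = 0 := by
        field_simp at hc'
        linear_combination (-1/2 : ℂ) * hc'
      exact Complex.exp_ne_zero _ he0
    · intro hc
      have hc' : (1 - e) / (1 + e) = -1 := OnePoint.coe_injective hc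
      have : (1 : ℂ) - e = -(1 + e) := by
        field_simp at hc'
        linear_combination hc'
      have : (2 : ℂ) = 0 := by linear_combination this
      norm_num at this

lemma Gperiod (z : ℂ) (n : ℤ) : G (z + n) = G z := by
  have hexp : Complex.exp (2 * Real.pi * Complex.I * (z + n)) =
      Complex.exp (2 * Real.pi * Complex.I * z) := by
    rw [show (2 * (Real.pi : ℂ) * Complex.I * (z + n)) =
        2 * Real.pi * Complex.I * z + n * (2 * Real.pi * Complex.I) by ring,
      Complex.exp_add, Complex.exp_int_mul_two_pi_mul_I, mul_one]
  simp only [G, hexp]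

lemma Ginj (z w : ℂ) (h : G z = G w) : ∃ n : ℤ, w = z + n := by
  set a := Complex.exp (2 * Real.pi * Complex.I * z) with ha
  set b := Complex.exp (2 * Real.pi * Complex.I * w) with hb
  have hab : a = b := by
    by_cases h1 : 1 + a = 0 <;> by_cases h2 : 1 + b = 0
    · linear_combination h1 - h2
    · rw [G, if_pos h1] at h
      rw [G, if_neg h2] at h
      exact absurd h (OnePoint.infty_ne_coe _)
    · rw [G, if_neg h1] at h
      rw [G, if_pos h2] at h
      exact absurd h.symm (OnePoint.infty_ne_coe _)
    · rw [G, if_neg h1, G, if_neg h2] at h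
      have h' : (1 - a) / (1 + a) = (1 - b) / (1 + b) := OnePoint.coe_injective h
      field_simp at h'
      linear_combination (-1/2 : ℂ) * h'
  rw [ha, hb, Complex.exp_eq_exp_iff_exists_int] at hab
  obtain ⟨n, hn⟩ := hab
  refine ⟨-n, ?_⟩
  have : (2 * (Real.pi : ℂ) * Complex.I) * z = (2 * (Real.pi : ℂ) * Complex.I) * (w + n) := by
    rw [hn]; push_cast; ring
  have hz := mul_left_cancel₀ two_pi_I_ne this
  rw [hz]; push_cast; ring

lemma Gsurj (w : OnePoint ℂ) (hw : w ∈ M) :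
    ∃ z : ℂ, z ∉ Set.range ((↑) : ℤ → ℂ) ∧ G z = w := by
  induction w using OnePoint.rec with
  | infty =>
    refine ⟨1/2, ?_, ?_⟩
    · rintro ⟨n, hn⟩
      have h2 : ((2 * n : ℤ) : ℂ) = 1 := by push_cast; rw [hn]; norm_num
      have : (2 * n : ℤ) = 1 := by exact_mod_cast h2
      omega
    · have hexp : Complex.exp (2 * Real.pi * Complex.I * (1/2)) = -1 := by
        rw [show (2 * (Real.pi : ℂ) * Complex.I * (1/2)) = Real.pi * Complex.I by ring,
          Complex.exp_pi_mul_I]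
      rw [G, hexp, if_pos (by norm_num)]
  | coe u =>
    obtain ⟨hu0, hu1, hum1⟩ := hw
    have hu0' : u ≠ 0 := fun h => hu0 (by rw [h])
    have hu1' : u ≠ 1 := fun h => hu1 (by rw [h])
    have hum1' : u ≠ -1 := fun h => hum1 (by rw [h])
    have hden : (1 : ℂ) + u ≠ 0 := fun h => hum1' (by linear_combination h)
    set v := (1 - u) / (1 + u) with hv
    have hv0 : v ≠ 0 := by
      rw [hv, div_ne_zero_iff]
      exact ⟨fun h => hu1' (by linear_combination -h), hden⟩
    obtain ⟨t, ht⟩ : ∃ t, Complex.exp t = v := by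
      have : v ∈ Set.range Complex.exp := by rw [Complex.range_exp]; exact hv0
      exact this
    refine ⟨t / (2 * Real.pi * Complex.I), ?_, ?_⟩
    · rintro ⟨n, hn⟩
      have hz : (2 * (Real.pi : ℂ) * Complex.I) * (t / (2 * Real.pi * Complex.I)) = t :=
        mul_div_cancel₀ _ two_pi_I_ne
      have hexp1 : Complex.exp (2 * Real.pi * Complex.I * (t / (2 * Real.pi * Complex.I))) = 1 := by
        apply (exp_eq_one_iff_int _).mpr ⟨n, hn.symm⟩
      rw [hz, ht] at hexp1
      have : (1 : ℂ) - u = 1 + u := by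
        rw [hv, div_eq_one_iff_eq hden] at hexp1
        exact hexp1
      exact hu0' (by linear_combination (-1/2 : ℂ) * this)
    · have hz : (2 * (Real.pi : ℂ) * Complex.I) * (t / (2 * Real.pi * Complex.I)) = t :=
        mul_div_cancel₀ _ two_pi_I_ne
      have hev : Complex.exp (2 * Real.pi * Complex.I * (t / (2 * Real.pi * Complex.I))) = v := by
        rw [hz, ht]
      have h1v : (1 : ℂ) + v ≠ 0 := by
        intro h
        have h2 : (2 : ℂ) / (1 + u) = 0 := by
          rw [← h, hv]; field_simp; norm_num
        exact div_ne_zero two_ne_zero hden h2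
      rw [G, hev, if_neg h1v]
      congr 1
      rw [hv]
      field_simp
      ring

end Aux

theorem stmt_10 :
    ∃ h : ∀ z : CminusZ, G z.1 ∈ M,
      ∃ f : Quotient transSetoid → M,
        Function.Bijective f ∧
          ∀ z : CminusZ, f (Quotient.mk transSetoid z) = ⟨G z.1, h z⟩ := by
  refine ⟨fun z => Aux.Gmem z.1 z.2, ?_⟩
  refine ⟨Quotient.lift (fun z : CminusZ => (⟨G z.1, Aux.Gmem z.1 z.2⟩ : M)) ?_, ?_, ?_⟩
  · rintro z w ⟨n, hn⟩
    apply Subtype.ext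
    show G z.1 = G w.1
    rw [hn, Aux.Gperiod]
  · constructor
    · intro x y
      refine Quotient.inductionOn₂ x y ?_
      intro z w h
      have hG : G z.1 = G w.1 := congrArg Subtype.val h
      exact Quotient.sound (Aux.Ginj z.1 w.1 hG)
    · rintro ⟨w, hw⟩
      obtain ⟨z, hz, hGz⟩ := Aux.Gsurj w hw
      exact ⟨Quotient.mk transSetoid ⟨z, hz⟩, Subtype.ext hGz⟩
  · intro z; rfl
end
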